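/- Let $C^*$ be a cochain complex of complete $A_R$-modules whose cohomology groups are finitely generated over $A_R = \mathbb{C}[u,t][[q]]/(ut-q)$ in each degree, such that $t-1$ acts injectively on each $C^i$, and such that $C^*$ carries a homotopy connection (a pre-connection along $t\partial_t - u\partial_u$ commuting with the differential). Then for each $i$, $H^i(C^*/(t-1)C^*) \cong H^i(C^*)/(t-1)H^i(C^*)$. -/

import Mathlib

/-! A connection `D` along a derivation `δ` forces `s` to act injectively on a Noetherian module
as soon as `s` and `δ s` are coprime. The chain `ker sⁿ` stabilises at some `N`, and the Leibniz
rule `s • D (sⁿ • x) = n sⁿ δ(s) • x + s^(n+1) • D x` makes `ker s^N` stable under `D`. On a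
`D`-stable submodule killed by `s^(n+1)`, applying `D` to `s^(n+1) • x = 0` leaves
`(n + 1) sⁿ δ(s) • x = 0`, so in characteristic zero `sⁿ` already kills it; descending, the
submodule is zero.

For `s = t - 1` we have `δ s = t = s + 1`. On the cohomology `Hⁱ(C*)`, Noetherian over `A_R` and
carrying the connection induced by the homotopy connection, this says that a cocycle `c` with
`(t - 1) c` a coboundary is a coboundary: the surjectivity half of the comparison. Injectivity only
uses that `t - 1` is injective on cochains. -/

set_option synthInstance.maxHeartbeats 1000000
set_option maxHeartbeats 1000000

noncomputable section

/-- Polynomials `ℂ[u,t]` with `u = X 0`, `t = X 1`. -/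
abbrev Pol2 : Type := MvPolynomial (Fin 2) ℂ

/-- The ring `A_R = ℂ[u,t][[q]]/(ut - q)`. -/
abbrev ARing : Type :=
  (PowerSeries Pol2) ⧸
    (Ideal.span {(PowerSeries.C (R := Pol2)) (MvPolynomial.X 0 * MvPolynomial.X 1) - PowerSeries.X})

instance : Algebra ℂ ARing := Ideal.Quotient.algebra ℂ
instance : Module ℂ ARing := Algebra.toModule

/-- The element `u` of `A_R`. -/
def uA : ARing := Ideal.Quotient.mk _ ((PowerSeries.C (R := Pol2)) (MvPolynomial.X 0))

/-- The element `t` of `A_R`. -/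
def tA : ARing := Ideal.Quotient.mk _ ((PowerSeries.C (R := Pol2)) (MvPolynomial.X 1))

/-- The element `q` of `A_R`. -/
def qA : ARing := Ideal.Quotient.mk _ (PowerSeries.X : PowerSeries Pol2)

def IsConnection {k R M : Type*} [CommRing k] [CommRing R] [Algebra k R] [AddCommGroup M]
    [Module R M] (δ : Derivation k R R) (D : M →+ M) : Prop :=
  ∀ (a : R) (x : M), D (a • x) = δ a • x + a • D x

theorem Derivation.mul_leibniz_pow {k R : Type*} [CommRing k] [CommRing R] [Algebra k R]
    (δ : Derivation k R R) (s : R) (n : ℕ) : s * δ (s ^ n) = n * s ^ n * δ s := by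
  cases n with
  | zero => simp
  | succ n =>
    rw [Derivation.leibniz_pow, nsmul_eq_mul, smul_eq_mul, Nat.add_sub_cancel]
    ring

def Submodule.mapQAddHom {R M : Type*} [Ring R] [AddCommGroup M] [Module R M]
    (B : Submodule R M) (D : M →+ M) (hB : ∀ x ∈ B, D x ∈ B) : M ⧸ B →+ M ⧸ B :=
  QuotientAddGroup.map B.toAddSubgroup B.toAddSubgroup D hB

namespace IsConnection

variable {k R M : Type*} [CommRing R] [AddCommGroup M] [Module R M] {D : M →+ M}

section

variable [CommRing k] [Algebra k R] {δ : Derivation k R R}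

theorem pow_succ_smul_apply_eq_zero (hD : IsConnection δ D) {s : R} {n : ℕ} {x : M}
    (hx : s ^ n • x = 0) : s ^ (n + 1) • D x = 0 := by
  have h := hD (s ^ n) x
  rw [hx, map_zero] at h
  have h' : (s * δ (s ^ n)) • x = (n * δ s) • s ^ n • x := by
    rw [δ.mul_leibniz_pow, smul_smul]
    ring_nf
  linear_combination (norm := module) -(s • h) - h' - (n * δ s) • hx

theorem quotient (hD : IsConnection δ D) {B : Submodule R M} (hB : ∀ x ∈ B, D x ∈ B) :
    IsConnection δ (B.mapQAddHom D hB) := by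
  intro a x
  induction x using Submodule.Quotient.induction_on with
  | H x => exact congrArg B.mkQ (hD a x)

theorem restrict (hD : IsConnection δ D) {N : Submodule R M} (hN : ∀ x ∈ N, D x ∈ N) :
    IsConnection δ ((D.comp N.subtype.toAddMonoidHom).codRestrict N fun x => hN x x.2) :=
  fun a x => Subtype.ext (hD a x)

end

variable [Field k] [CharZero k] [Algebra k R] {δ : Derivation k R R}

theorem pow_smul_eq_zero_of_pow_succ (hD : IsConnection δ D) {s : R} (hs : IsCoprime s (δ s))
    {n : ℕ} {x : M} (hx : s ^ (n + 1) • x = 0) (hDx : s ^ (n + 1) • D x = 0) :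
    s ^ n • x = 0 := by
  have h := hD (s ^ (n + 1)) x
  rw [hx, map_zero, hDx, add_zero, Derivation.leibniz_pow, Nat.add_sub_cancel, smul_assoc,
    smul_assoc] at h
  have hunit : IsUnit ((n + 1 : ℕ) : R) := by
    simpa using (IsUnit.mk0 ((n + 1 : ℕ) : k) (Nat.cast_ne_zero.mpr n.succ_ne_zero)).map
      (algebraMap k R)
  have h' : δ s • s ^ n • x = 0 := by
    rw [smul_comm, ← hunit.smul_left_cancel, smul_zero, Nat.cast_smul_eq_nsmul, h.symm]
  obtain ⟨a, b, hab⟩ := hs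
  linear_combination (norm := module) a • hx + b • h' - hab • (s ^ n • x)

theorem eq_zero_of_pow_smul_eq_zero (hD : IsConnection δ D) {s : R} (hs : IsCoprime s (δ s))
    {T : Set M} (hDT : ∀ x ∈ T, D x ∈ T) {n : ℕ} (hT : ∀ x ∈ T, s ^ n • x = 0) :
    ∀ x ∈ T, x = 0 := by
  induction n with
  | zero => simpa using hT
  | succ n ih =>
    exact ih fun x hx => hD.pow_smul_eq_zero_of_pow_succ hs (hT x hx) (hT (D x) (hDT x hx))

theorem eq_zero_of_smul_eq_zero [IsNoetherian R M] (hD : IsConnection δ D) {s : R}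
    (hs : IsCoprime s (δ s)) {x : M} (hx : s • x = 0) : x = 0 := by
  set f := algebraMap R (Module.End R M) s
  have hker : ∀ n (y : M), y ∈ LinearMap.ker (f ^ n) ↔ s ^ n • y = 0 := fun n y => by
    rw [LinearMap.mem_ker, ← map_pow, Module.algebraMap_end_apply]
  obtain ⟨N, hN⟩ := monotone_stabilizes_iff_noetherian.mpr inferInstance f.iterateKer
  have hstab : ∀ y : M, s ^ (N + 1) • y = 0 → s ^ N • y = 0 := fun y hy => by
    rw [← hker, show LinearMap.ker (f ^ N) = LinearMap.ker (f ^ (N + 1)) from hN _ N.le_succ]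
    exact (hker _ y).mpr hy
  refine hD.eq_zero_of_pow_smul_eq_zero hs (T := {y | s ^ N • y = 0})
    (fun y hy => hstab _ (hD.pow_succ_smul_apply_eq_zero hy)) (fun y hy => hy) x ?_
  exact hstab x (by rw [pow_succ, mul_smul, hx, smul_zero])

theorem mem_of_smul_mem [IsNoetherianRing R] (hD : IsConnection δ D) {s : R}
    (hs : IsCoprime s (δ s)) {Z B : Submodule R M} (hDZ : ∀ x ∈ Z, D x ∈ Z)
    (hDB : ∀ x ∈ B, D x ∈ B) (hfg : (Z.map B.mkQ).FG) {x : M} (hx : x ∈ Z) (hsx : s • x ∈ B) :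
    x ∈ B := by
  have := isNoetherian_of_fg_of_noetherian _ hfg
  have hDH : ∀ y ∈ Z.map B.mkQ, B.mapQAddHom D hDB y ∈ Z.map B.mkQ := by
    rintro _ ⟨y, hy, rfl⟩
    exact ⟨D y, hDZ y hy, rfl⟩
  have h := ((hD.quotient hDB).restrict hDH).eq_zero_of_smul_eq_zero hs
    (x := ⟨B.mkQ x, x, hx, rfl⟩) (Subtype.ext ((Submodule.Quotient.mk_eq_zero B).mpr hsx))
  exact (Submodule.Quotient.mk_eq_zero B).mp (congrArg Subtype.val h)

end IsConnection

theorem Submodule.map_mkQ_fg_of_le_span_sup {R M : Type*} [Ring R] [AddCommGroup M]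
    [Module R M] {Z B : Submodule R M} {S : Finset M} (hSZ : ↑S ⊆ (Z : Set M))
    (hZ : Z ≤ span R ↑S ⊔ B) : (Z.map B.mkQ).FG := by
  have h : Z.map B.mkQ = (span R ↑S).map B.mkQ := by
    refine le_antisymm ?_ (map_mono (span_le.mpr hSZ))
    simpa [map_sup, mkQ_map_self] using map_mono (f := B.mkQ) hZ
  rw [h]
  exact (fg_span S.finite_toSet).map _

theorem isCoprime_tA_sub_one {DA : Derivation ℂ ARing ARing} (hDt : DA tA = tA) :
    IsCoprime (tA - 1) (DA (tA - 1)) :=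
  ⟨-1, 1, by rw [map_sub, hDt, Derivation.map_one_eq_zero]; ring⟩

theorem stmt13_general (DA : Derivation ℂ ARing ARing) (hDt : DA tA = tA)
    (C : ℤ → Type) [∀ i, AddCommGroup (C i)] [∀ i, Module ARing (C i)]
    (d : ∀ i, C i →ₗ[ARing] C (i + 1))
    (hd : ∀ i (x : C i), d (i + 1) (d i x) = 0)
    (hfg : ∀ i : ℤ, ∃ s : Finset (C (i + 1)),
        (∀ x ∈ s, d (i + 1) x = 0) ∧
        ∀ x : C (i + 1), d (i + 1) x = 0 →
          x ∈ Submodule.span ARing (s : Set (C (i + 1))) ⊔ LinearMap.range (d i))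
    (hinj : ∀ i (x : C i), (tA - 1) • x = 0 → x = 0)
    (Dc : ∀ i, C i →+ C i)
    (hDc : ∀ i (a : ARing) (x : C i), Dc i (a • x) = DA a • x + a • Dc i x)
    (hcomm : ∀ i (x : C i), Dc (i + 1) (d i x) = d i (Dc i x)) :
    ∀ i : ℤ,
      (∀ x : C (i + 1), d (i + 1) x = 0 → (∃ c w, x = (tA - 1) • c + d i w) →
          ∃ y w', d (i + 1) y = 0 ∧ x = (tA - 1) • y + d i w') ∧
      (∀ x : C (i + 1), (∃ c, d (i + 1) x = (tA - 1) • c) →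
          ∃ y, d (i + 1) y = 0 ∧ ∃ c' w, x - y = (tA - 1) • c' + d i w) := by
  intro i
  constructor
  · rintro x hx ⟨c, w, rfl⟩
    refine ⟨c, w, hinj _ _ ?_, rfl⟩
    simpa [hd] using hx
  · rintro x ⟨c, hc⟩
    have hdc : d (i + 1 + 1) c = 0 := hinj _ _ (by rw [← map_smul, ← hc, hd])
    obtain ⟨s, hsZ, hZ⟩ := hfg (i + 1)
    have hDZ : ∀ y ∈ LinearMap.ker (d (i + 1 + 1)), Dc _ y ∈ LinearMap.ker (d (i + 1 + 1)) :=
      fun y hy => by rw [LinearMap.mem_ker, ← hcomm, hy, map_zero]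
    have hDB : ∀ y ∈ LinearMap.range (d (i + 1)), Dc _ y ∈ LinearMap.range (d (i + 1)) := by
      rintro _ ⟨w, rfl⟩
      exact ⟨Dc _ w, (hcomm _ w).symm⟩
    obtain ⟨c₀, rfl⟩ := IsConnection.mem_of_smul_mem (hDc _) (isCoprime_tA_sub_one hDt) hDZ hDB
      (Submodule.map_mkQ_fg_of_le_span_sup hsZ hZ) hdc ⟨x, hc⟩
    refine ⟨x - (tA - 1) • c₀, by rw [map_sub, map_smul, hc, sub_self], c₀, 0, ?_⟩
    rw [map_zero, add_zero, sub_sub_cancel]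

/-- Let `C*` be a cochain complex of `q`-adically complete `A_R`-modules with finitely
generated cohomology in each degree, such that `t - 1` acts injectively on each `Cⁱ`, and
carrying a homotopy connection (a pre-connection along `t∂t - u∂u` commuting with the
differential).  Then for each `i`, the natural map
`H^i(C*)/(t-1)H^i(C*) → H^i(C*/(t-1)C*)` is an isomorphism (stated elementwise as
injectivity and surjectivity). -/
theorem stmt13 (DA : Derivation ℂ ARing ARing) (hDu : DA uA = -uA) (hDt : DA tA = tA)
    (C : ℤ → Type) [∀ i, AddCommGroup (C i)] [∀ i, Module ARing (C i)]
    (d : ∀ i, C i →ₗ[ARing] C (i + 1))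
    (hd : ∀ i (x : C i), d (i + 1) (d i x) = 0)
    (hcomp : ∀ i, IsAdicComplete (Ideal.span {qA}) (C i))
    (hfg : ∀ i : ℤ, ∃ s : Finset (C (i + 1)),
        (∀ x ∈ s, d (i + 1) x = 0) ∧
        ∀ x : C (i + 1), d (i + 1) x = 0 →
          x ∈ Submodule.span ARing (s : Set (C (i + 1))) ⊔ LinearMap.range (d i))
    (hinj : ∀ i (x : C i), (tA - 1) • x = 0 → x = 0)
    (Dc : ∀ i, C i →+ C i)
    (hDc : ∀ i (a : ARing) (x : C i), Dc i (a • x) = DA a • x + a • Dc i x)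
    (hcomm : ∀ i (x : C i), Dc (i + 1) (d i x) = d i (Dc i x)) :
    ∀ i : ℤ,
      (∀ x : C (i + 1), d (i + 1) x = 0 → (∃ c w, x = (tA - 1) • c + d i w) →
          ∃ y w', d (i + 1) y = 0 ∧ x = (tA - 1) • y + d i w') ∧
      (∀ x : C (i + 1), (∃ c, d (i + 1) x = (tA - 1) • c) →
          ∃ y, d (i + 1) y = 0 ∧ ∃ c' w, x - y = (tA - 1) • c' + d i w) :=
  stmt13_general DA hDt C d hd hfg hinj Dc hDc hcomm
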